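/- arXiv:2208.04175 — 3 statements merged into one kernel-verified Lean document; each statement's English description precedes it below -/
import Mathlib

section
/- Let w be a word with m letters 𝗇 and n letters 𝖾. Call a factor w' of w critical if w' has the form 𝗇^i𝖾 or 𝗇𝖾^i with i ≥ 2, the run of i repeated letters in w' is maximal (it cannot be extended by the same letter within w), and the lattice path of w shares at least one unit step (same step at the same location) with the lattice path of the staircase monomial δ_{m_w} among the steps corresponding to the letters of w'. Then w possesses no critical factor if and only if w = 𝖾^a(𝗇𝖾)^b𝗇^c for some nonnegative integers a, b, c (that is, w is a staircase monomial). -/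
noncomputable section

/-- The base field `F = ℂ(q)`. -/
abbrev F : Type := RatFunc ℂ

/-- The indeterminate `q`. -/
def qq : F := RatFunc.X

/-- The `q`-integer `[j]_q = 1 + q + ⋯ + q^(j-1)`. -/
def qint (j : ℕ) : F := ∑ i ∈ Finset.range j, qq ^ i

/-- The `q`-factorial `[j]_q! = [1]_q ⋯ [j]_q`. -/
def qfact (j : ℕ) : F := ∏ i ∈ Finset.range j, qint (i + 1)

/-- Modular relations defining the path algebra `𝒫`; the letter `true` is `𝗇`,
the letter `false` is `𝖾`. -/
inductive PathRel : FreeAlgebra F Bool → FreeAlgebra F Bool → Prop where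
  | mod1 : PathRel
      ((1 + qq) • (FreeAlgebra.ι F false * FreeAlgebra.ι F true * FreeAlgebra.ι F false))
      (qq • (FreeAlgebra.ι F false * FreeAlgebra.ι F false * FreeAlgebra.ι F true) +
        FreeAlgebra.ι F true * FreeAlgebra.ι F false * FreeAlgebra.ι F false)
  | mod2 : PathRel
      ((1 + qq) • (FreeAlgebra.ι F true * FreeAlgebra.ι F false * FreeAlgebra.ι F true))
      (qq • (FreeAlgebra.ι F false * FreeAlgebra.ι F true * FreeAlgebra.ι F true) +
        FreeAlgebra.ι F true * FreeAlgebra.ι F true * FreeAlgebra.ι F false)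

/-- The path algebra `𝒫`. -/
abbrev PathAlg : Type := RingQuot PathRel

/-- The generator `𝗇` of `𝒫`. -/
def Pn : PathAlg := RingQuot.mkAlgHom F PathRel (FreeAlgebra.ι F true)

/-- The generator `𝖾` of `𝒫`. -/
def Pe : PathAlg := RingQuot.mkAlgHom F PathRel (FreeAlgebra.ι F false)

/-- The element of `𝒫` determined by a word in `𝗇` (`true`) and `𝖾` (`false`). -/
def wordElem (w : List Bool) : PathAlg := (w.map fun b => if b then Pn else Pe).prod

/-- `𝒫_{m,n}`: the span of words with `m` letters `𝗇` and `n` letters `𝖾`. -/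
def Pmn (m n : ℕ) : Submodule F PathAlg :=
  Submodule.span F {x | ∃ w : List Bool, w.count true = m ∧ w.count false = n ∧ x = wordElem w}

/-- `lam` (0-indexed list of parts) is a partition contained in the `m × n` box. -/
def IsPartitionIn (m n : ℕ) (lam : ℕ → ℕ) : Prop :=
  (∀ i j, i ≤ j → lam j ≤ lam i) ∧ (∀ i, lam i ≤ n) ∧ (∀ i, m ≤ i → lam i = 0)

/-- `eastBefore w r` = number of east steps (`false`) preceding the `(r+1)`-st
north step (`true`) of `w`. -/
def eastBefore : List Bool → ℕ → ℕ
  | [], _ => 0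
  | true :: _, 0 => 0
  | true :: w, r + 1 => eastBefore w r
  | false :: w, r => eastBefore w r + 1

/-- `northBefore w r` = number of north steps (`true`) preceding the `(r+1)`-st
east step (`false`) of `w`. -/
def northBefore : List Bool → ℕ → ℕ
  | [], _ => 0
  | false :: _, 0 => 0
  | false :: w, r + 1 => northBefore w r
  | true :: w, r => northBefore w r + 1

/-- The partition `λ(w)` of a word with `m` letters `𝗇`, as a 0-indexed function:
row `i` (from the top) of the partition has `eastBefore w (m-1-i)` cells. -/
def wordLam (m : ℕ) (w : List Bool) : ℕ → ℕ :=
  fun i => if i < m then eastBefore w (m - 1 - i) else 0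

/-- The word `w(λ)` of a partition `λ ⊆ m × n` (given as 0-indexed `lam : ℕ → ℕ`). -/
def wordOf (m n : ℕ) (lam : ℕ → ℕ) : List Bool :=
  ((List.range m).flatMap fun k =>
    List.replicate (lam (m - 1 - k) - lam (m - k)) false ++ [true]) ++
    List.replicate (n - lam 0) false

/-- The rook in column `j` of the placement `ρ` lies inside the Ferrers board of `lam`. -/
def rookInside (m n : ℕ) (lam : ℕ → ℕ) (ρ : Fin n ↪ Fin m) (j : Fin n) : Prop :=
  (j : ℕ) < lam (ρ j)

/-- The cell in row `i` (0-indexed from the top) and column `j` (0-indexed from the left)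
is unattacked for the maximal non-attacking rook placement `ρ` (with the Ferrers board of
`lam` drawn in the top-left corner of the `m × n` board). -/
def Unattacked (m n : ℕ) (lam : ℕ → ℕ) (ρ : Fin n ↪ Fin m) (i : Fin m) (j : Fin n) : Prop :=
  ρ j ≠ i ∧ ¬ ((ρ j : ℕ) < (i : ℕ)) ∧
    (if (j : ℕ) < lam i then
      (∀ j' : Fin n, ρ j' = i → ¬ (j' < j)) ∧
      (∀ j' : Fin n, ρ j' = i → j < j' → (j' : ℕ) < lam i)
    else
      ∀ j' : Fin n, ρ j' = i → j' < j → (j' : ℕ) < lam i)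

/-- `stat ρ` = number of unattacked cells. -/
def statRook (m n : ℕ) (lam : ℕ → ℕ) (ρ : Fin n ↪ Fin m) : ℕ :=
  Set.ncard {p : Fin m × Fin n | Unattacked m n lam ρ p.1 p.2}

/-- The `q`-hit number `H_k^{m,n}(λ)`. -/
def qHit (m n : ℕ) (lam : ℕ → ℕ) (k : ℕ) : F :=
  ∑ ρ : Fin n ↪ Fin m,
    if Set.ncard {j : Fin n | rookInside m n lam ρ j} = k then qq ^ statRook m n lam ρ else 0

/-- A Dyck word of size `N`. -/
def IsDyck (N : ℕ) (w : List Bool) : Prop :=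
  w.count true = N ∧ w.count false = N ∧
    ∀ p : ℕ, (w.take p).count false ≤ (w.take p).count true

/-- Adjacency of the Dyck graph `G(D)` of a Dyck word of size `N` on vertices `Fin N`
(0-indexed: vertex `a` is the vertex `a+1` of `{1,…,N}`). -/
def dyckAdj (N : ℕ) (w : List Bool) (a b : Fin N) : Prop :=
  ((a : ℕ) < b ∧ (b : ℕ) < northBefore w a) ∨ ((b : ℕ) < a ∧ (a : ℕ) < northBefore w b)

/-- Proper colorings of the Dyck graph `G(w)` with `ν` colors. -/
def properColorings (N ν : ℕ) (w : List Bool) : Set (Fin N → Fin ν) :=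
  {κ | ∀ a b : Fin N, dyckAdj N w a b → κ a ≠ κ b}

/-- Number of ascents of a coloring. -/
def ascColor (N ν : ℕ) (w : List Bool) (κ : Fin N → Fin ν) : ℕ :=
  Set.ncard {p : Fin N × Fin N | (p.1 : ℕ) < p.2 ∧ dyckAdj N w p.1 p.2 ∧ κ p.1 < κ p.2}

open scoped Classical in
/-- The chromatic quasisymmetric polynomial `X_{G(w)}(x_1,…,x_ν; q)`. -/
def chromX (N ν : ℕ) (w : List Bool) : MvPolynomial (Fin ν) F :=
  ∑ κ : Fin N → Fin ν,
    if κ ∈ properColorings N ν w then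
      MvPolynomial.C (qq ^ ascColor N ν w κ) * ∏ a : Fin N, MvPolynomial.X (κ a)
    else 0

/-- The staircase word `δ_k = 𝖾^{n-k}(𝗇𝖾)^k𝗇^{m-k}`. -/
def deltaWord (m n k : ℕ) : List Bool :=
  List.replicate (n - k) false ++ (List.replicate k [true, false]).flatten ++
    List.replicate (m - k) true

/-- `m_w`: the largest `k` with `λ(w) ⊆ λ(δ_k)`, i.e. such that the path of `δ_k`
lies weakly below the path of `w`. -/
def mw (m n : ℕ) (w : List Bool) : ℕ :=
  Finset.sup ((Finset.range (min m n + 1)).filter fun k =>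
    ∀ i ∈ Finset.range m, wordLam m w i ≤ wordLam m (deltaWord m n k) i) id

/-- The lattice paths of `w` and `d` share the unit step of `w` corresponding to
the letter at (0-indexed) position `p` of `w`. -/
def StepShared (w d : List Bool) (p : ℕ) : Prop :=
  ∃ p' : ℕ, p' < d.length ∧ d[p']? = w[p]? ∧
    (d.take p').count true = (w.take p).count true ∧
    (d.take p').count false = (w.take p).count false

/-- `w` possesses a critical factor: a factor `𝗇^i𝖾` or `𝗇𝖾^i` with `i ≥ 2`, whose run of
repeated letters is maximal within `w`, and whose letters contain a unit step shared by
the lattice paths of `w` and of `δ_{m_w}`. -/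
def HasCriticalFactor (m n : ℕ) (w : List Bool) : Prop :=
  ∃ (x y : List Bool) (i : ℕ), 2 ≤ i ∧
    ((w = x ++ (List.replicate i true ++ [false]) ++ y ∧ x.getLast? ≠ some true ∧
        ∃ p, x.length ≤ p ∧ p < x.length + i + 1 ∧ StepShared w (deltaWord m n (mw m n w)) p) ∨
      (w = x ++ ([true] ++ List.replicate i false) ++ y ∧ y.head? ≠ some false ∧
        ∃ p, x.length ≤ p ∧ p < x.length + i + 1 ∧ StepShared w (deltaWord m n (mw m n w)) p))

/-- Evaluation of a (commutative) polynomial in two variables at the commuting elements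
`s`, `t` of `𝒫`. -/
def evalST (s t : PathAlg) (P : MvPolynomial (Fin 2) F) : PathAlg :=
  ∑ d ∈ P.support, P.coeff d • (s ^ (d 0) * t ^ (d 1))

/-- The conjugate partition: `conjP m lam i = λ'_i = #{rows r : λ_r ≥ i}` (here `i ≥ 1`,
rows 0-indexed, `lam` supported on `[0, m)`). -/
def conjP (m : ℕ) (lam : ℕ → ℕ) (i : ℕ) : ℕ :=
  ((Finset.range m).filter fun r => i ≤ lam r).card

/-- The sequence `b(λ) = (b_1,…,b_n)` (1-indexed `i`) for `λ ⊆ m × n`, `m ≥ n`. -/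
def bSeq (m : ℕ) (lam : ℕ → ℕ) (i : ℕ) : ℤ :=
  if lam (m - i) < i then (m : ℤ) + 1 - i - conjP m lam i else (i : ℤ) - lam (m - i)

/-- The element `wt_i ∈ 𝒫`. -/
def wt (i : ℤ) : PathAlg :=
  if 1 ≤ i then qint i.toNat • (Pn * Pe) - (qq * qint (i - 1).toNat) • (Pe * Pn)
  else (qq ^ i) • (qint (1 - i).toNat • (Pe * Pn) - qint (-i).toNat • (Pn * Pe))

/-- The defining relations of the `q`-Klyachko algebra. -/
def klyRels : Set (MvPolynomial ℤ F) :=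
  {x | ∃ i : ℤ, x = MvPolynomial.C (1 + qq) * (MvPolynomial.X i * MvPolynomial.X i) -
    (MvPolynomial.C qq * (MvPolynomial.X i * MvPolynomial.X (i - 1)) +
      MvPolynomial.X i * MvPolynomial.X (i + 1))}

/-- The `q`-Klyachko algebra `𝒦`. -/
abbrev Kly : Type := MvPolynomial ℤ F ⧸ Ideal.span klyRels

/-- The generator `u_i` of `𝒦`. -/
def uK (i : ℤ) : Kly := Ideal.Quotient.mk (Ideal.span klyRels) (MvPolynomial.X i)

/-- The element `u(λ) = u_{a_1} ⋯ u_{a_m}` of `𝒦`, where `a(λ)` is the area sequence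
of `λ ⊆ m × m` (here `a_{i+1} = (i+1) - λ_{m-i}` with `lam` 0-indexed). -/
def uLam (m : ℕ) (lam : ℕ → ℕ) : Kly :=
  ∏ i ∈ Finset.range m, uK ((i : ℤ) + 1 - lam (m - 1 - i))

/-- The partition `λ(G(D))` of a Dyck word of size `N`, 0-indexed:
`λ_{i+1} = N - h_{i+1}(D)`. -/
def lamG (N : ℕ) (D : List Bool) : ℕ → ℕ :=
  fun i => if i < N then N - northBefore D i else 0

/-- The number of nonzero parts of `λ(G(D))`. -/
def ellG (N : ℕ) (D : List Bool) : ℕ :=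
  ((Finset.range N).filter fun i => N - northBefore D i ≠ 0).card

/-- The Dyck graph `G(D)` is abelian. -/
def IsAbelian (N : ℕ) (D : List Bool) : Prop := lamG N D 0 + ellG N D ≤ N

/-- `r` is an acyclic orientation of the graph with adjacency `adj` on `Fin N`. -/
def IsAcyclicOrientation (N : ℕ) (adj : Fin N → Fin N → Prop)
    (r : Fin N → Fin N → Bool) : Prop :=
  (∀ a b, r a b = true → adj a b) ∧
  (∀ a b, adj a b → (r a b = true ↔ ¬ r b a = true)) ∧
  (∀ a, ¬ Relation.TransGen (fun u v => r u v = true) a a)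

/-- Number of ascents of an orientation. -/
def ascOrient (N : ℕ) (r : Fin N → Fin N → Bool) : ℕ :=
  Set.ncard {p : Fin N × Fin N | r p.1 p.2 = true ∧ (p.1 : ℕ) < p.2}

/-- Remove from `S` the sources of the orientation restricted to `S`. -/
def peel (N : ℕ) (r : Fin N → Fin N → Bool) (S : Set (Fin N)) : Set (Fin N) :=
  {v ∈ S | ∃ u ∈ S, r u v = true}

/-- Number of sources of the orientation restricted to `S`. -/
def numSources (N : ℕ) (r : Fin N → Fin N → Bool) (S : Set (Fin N)) : ℕ :=
  Set.ncard {v ∈ S | ∀ u ∈ S, ¬ r u v = true}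

open scoped Classical in
/-- `initial(A)`: the number of leading entries of the source sequence equal to `2`. -/
def initialA (N : ℕ) (r : Fin N → Fin N → Bool) : ℕ :=
  Finset.sup ((Finset.range (N + 1)).filter fun j =>
    ∀ k < j, numSources N r ((peel N r)^[k] Set.univ) = 2) id

end

/-!
Let `k = m_w` and let `E r` (`eastBefore w r`) be the number of east steps before north step
number `r` (from `0`) of `w`; for `δ_k` it is `n - k + min r k`. By definition of `m_w`,
`E r ≤ n - k + min r k` for all `r`, and maximality of `k` forces equality somewhere on the
diagonal part `E r = n - k + r`, `r ≤ k`. Once on the diagonal the path of `w` cannot leave it: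
arriving there by two or more east steps gives a critical factor `𝗇𝖾^i`, and leaving it by two
north steps in a row gives a critical factor `𝗇^i𝖾`, each sharing a step with `δ_k`. So
`w = δ_k`. Conversely a staircase word contains neither `𝗇𝗇𝖾` nor `𝗇𝖾𝖾`, which every critical
factor does.
-/

namespace List

theorem exists_eq_replicate_append_head?_ne {α : Type*} (y : List α) (b : α) :
    ∃ j z, y = replicate j b ++ z ∧ z.head? ≠ some b := by
  induction y with
  | nil => exact ⟨0, [], rfl, by simp⟩
  | cons c y ih =>
    by_cases hc : c = b
    · obtain ⟨j, z, rfl, hz⟩ := ih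
      exact ⟨j + 1, z, by simp [hc, replicate_succ], hz⟩
    · exact ⟨0, c :: y, rfl, by simpa using hc⟩

theorem exists_eq_append_replicate_getLast?_ne {α : Type*} (x : List α) (b : α) :
    ∃ z j, x = z ++ replicate j b ∧ z.getLast? ≠ some b := by
  induction x using List.reverseRecOn with
  | nil => exact ⟨[], 0, rfl, by simp⟩
  | append_singleton x c ih =>
    by_cases hc : c = b
    · obtain ⟨z, j, rfl, hz⟩ := ih
      exact ⟨z, j + 1, by simp [hc, replicate_succ'], hz⟩
    · exact ⟨x ++ [c], 0, by simp, by simpa using hc⟩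

end List

open List

@[simp] theorem eastBefore_nil (r : ℕ) : eastBefore [] r = 0 := rfl

@[simp] theorem eastBefore_true_cons_zero (w : List Bool) : eastBefore (true :: w) 0 = 0 := rfl

@[simp] theorem eastBefore_true_cons_succ (w : List Bool) (r : ℕ) :
    eastBefore (true :: w) (r + 1) = eastBefore w r := rfl

@[simp] theorem eastBefore_false_cons (w : List Bool) (r : ℕ) :
    eastBefore (false :: w) r = eastBefore w r + 1 := rfl

theorem eastBefore_replicate_false_append (j : ℕ) (y : List Bool) (r : ℕ) :
    eastBefore (replicate j false ++ y) r = j + eastBefore y r := by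
  induction j with
  | zero => simp
  | succ j ih => simp [replicate_succ, ih]; omega

theorem eastBefore_zero_of_head?_ne {y : List Bool} (hy : y.head? ≠ some false) :
    eastBefore y 0 = 0 := by
  match y with
  | [] => rfl
  | true :: _ => rfl
  | false :: _ => simp at hy

theorem eastBefore_le_succ (w : List Bool) (r : ℕ) : eastBefore w r ≤ eastBefore w (r + 1) := by
  induction w generalizing r with
  | nil => simp
  | cons b w ih =>
    cases b
    · simpa using ih r
    · cases r <;> simp [ih]

theorem monotone_eastBefore (w : List Bool) : Monotone (eastBefore w) :=
  monotone_nat_of_le_succ (eastBefore_le_succ w)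

theorem eastBefore_le_count_false (w : List Bool) (r : ℕ) : eastBefore w r ≤ w.count false := by
  induction w generalizing r with
  | nil => simp
  | cons b w ih =>
    cases b
    · simpa using ih r
    · cases r <;> simp [ih]

theorem eastBefore_of_count_true_le {w : List Bool} {r : ℕ} (h : w.count true ≤ r) :
    eastBefore w r = w.count false := by
  induction w generalizing r with
  | nil => simp
  | cons b w ih =>
    cases b
    · simpa using ih (by simpa using h)
    · obtain ⟨r, rfl⟩ : ∃ r', r = r' + 1 := ⟨r - 1, by simp at h; omega⟩
      simpa using ih (by simpa using h)

theorem eq_of_eastBefore_eq {w w' : List Bool} (ht : w.count true = w'.count true)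
    (hf : w.count false = w'.count false)
    (h : ∀ r < w.count true, eastBefore w r = eastBefore w' r) : w = w' := by
  induction w generalizing w' with
  | nil => cases w' with
    | nil => rfl
    | cons b w' => cases b <;> simp at ht hf
  | cons b w ih =>
    cases w' with
    | nil => cases b <;> simp at ht hf
    | cons b' w' =>
      cases b <;> cases b'
      · simp at ht hf h
        exact congrArg _ (ih ht hf h)
      · simpa using h 0 (by rw [ht]; simp)
      · simpa using h 0 (by simp)
      · simp at ht hf h
        exact congrArg _ (ih ht hf fun r hr => h (r + 1) (by omega))

theorem exists_eq_append_true_replicate_false (w : List Bool) {r : ℕ}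
    (hr : r < w.count true) :
    ∃ x g y, w = x ++ true :: (replicate g false ++ y) ∧ y.head? ≠ some false ∧
      x.count true = r ∧ x.count false = eastBefore w r ∧
      eastBefore w (r + 1) = eastBefore w r + g := by
  induction w generalizing r with
  | nil => simp at hr
  | cons b w ih =>
    cases b
    · obtain ⟨x, g, y, rfl, hy, hxt, hxf, hg⟩ := ih (by simpa using hr)
      exact ⟨false :: x, g, y, rfl, hy, by simpa using hxt, by simpa using hxf,
        by simp [hg]; omega⟩
    · cases r with
      | zero =>
        obtain ⟨g, y, rfl, hy⟩ := exists_eq_replicate_append_head?_ne w false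
        refine ⟨[], g, y, rfl, hy, rfl, rfl, ?_⟩
        simp [eastBefore_replicate_false_append, eastBefore_zero_of_head?_ne hy]
      | succ r =>
        obtain ⟨x, g, y, rfl, hy, hxt, hxf, hg⟩ := ih (by simpa using hr)
        exact ⟨true :: x, g, y, rfl, hy, by simpa using hxt, by simpa using hxf,
          by simpa using hg⟩

theorem eastBefore_flatten_replicate_append_replicate (k c r : ℕ) :
    eastBefore ((replicate k [true, false]).flatten ++ replicate c true) r = min r k := by
  induction k generalizing r with
  | zero =>
    simp only [replicate_zero, flatten_nil, nil_append, Nat.min_zero]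
    induction c generalizing r with
    | zero => simp
    | succ c ih => cases r <;> simp [replicate_succ, ih]
  | succ k ih => cases r <;> simp [replicate_succ, ih]

theorem eastBefore_deltaWord (m n k r : ℕ) :
    eastBefore (deltaWord m n k) r = n - k + min r k := by
  rw [deltaWord, append_assoc, eastBefore_replicate_false_append,
    eastBefore_flatten_replicate_append_replicate]

theorem count_true_deltaWord {m k : ℕ} (n : ℕ) (h : k ≤ m) :
    (deltaWord m n k).count true = m := by
  simp [deltaWord, count_flatten, count_replicate]
  omega

theorem count_false_deltaWord {n k : ℕ} (m : ℕ) (h : k ≤ n) :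
    (deltaWord m n k).count false = n := by
  simp [deltaWord, count_flatten, count_replicate]
  omega

theorem deltaWord_eq_append {m n k r : ℕ} (h : r < k) :
    ∃ X Y, deltaWord m n k = X ++ true :: false :: Y ∧
      X.count true = r ∧ X.count false = n - k + r := by
  obtain ⟨j, rfl⟩ : ∃ j, k = r + 1 + j := ⟨k - r - 1, by omega⟩
  refine ⟨replicate (n - (r + 1 + j)) false ++ (replicate r [true, false]).flatten,
    (replicate j [true, false]).flatten ++ replicate (m - (r + 1 + j)) true, ?_, ?_, ?_⟩
  · simp [deltaWord, replicate_add]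
  · simp [count_flatten, count_replicate]
  · simp [count_flatten]

theorem stepShared_append_cons {x y X Y : List Bool} {b : Bool}
    (ht : X.count true = x.count true) (hf : X.count false = x.count false) :
    StepShared (x ++ b :: y) (X ++ b :: Y) x.length :=
  ⟨X.length, by simp, by simp, by simpa using ht, by simpa using hf⟩

section MW

variable {m n : ℕ} {w : List Bool}

theorem isGreatest_mw (hn : w.count false = n) :
    IsGreatest {k | k ≤ min m n ∧ ∀ r < m, eastBefore w r ≤ n - k + min r k} (mw m n w) := by
  set S := (Finset.range (min m n + 1)).filter fun k =>
    ∀ i ∈ Finset.range m, wordLam m w i ≤ wordLam m (deltaWord m n k) i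
  have hS : (S : Set ℕ) = {k | k ≤ min m n ∧ ∀ r < m, eastBefore w r ≤ n - k + min r k} := by
    ext k
    simp only [S, Finset.coe_filter, Finset.mem_range, Set.mem_ofPred_eq, wordLam,
      eastBefore_deltaWord]
    refine and_congr (by omega) ⟨fun h r hr => ?_, fun h i hi => ?_⟩
    · simpa [show m - 1 - r < m by omega, show m - 1 - (m - 1 - r) = r by omega]
        using h (m - 1 - r) (by omega)
    · simpa [hi] using h (m - 1 - i) (by omega)
  have hne : S.Nonempty := by
    refine ⟨0, Finset.mem_coe.mp ?_⟩
    rw [hS]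
    exact ⟨Nat.zero_le _, fun r _ => by simpa [hn] using eastBefore_le_count_false w r⟩
  rw [← hS, mw, ← Finset.sup'_eq_sup hne, ← Finset.max'_eq_sup']
  exact S.isGreatest_max' hne

theorem eastBefore_le_mw (hm : w.count true = m) (hn : w.count false = n) {r : ℕ}
    (hr : r ≤ m) :
    eastBefore w r ≤ n - mw m n w + min r (mw m n w) := by
  obtain ⟨⟨hk, hbelow⟩, -⟩ := isGreatest_mw (m := m) hn
  rcases hr.lt_or_eq with hr | rfl
  · exact hbelow r hr
  · rw [eastBefore_of_count_true_le hm.le]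
    omega

theorem exists_eastBefore_eq_mw (hm : w.count true = m) (hn : w.count false = n) :
    ∃ r ≤ mw m n w, eastBefore w r = n - mw m n w + r := by
  obtain ⟨⟨hk, hbelow⟩, hmax⟩ := isGreatest_mw (m := m) hn
  set k := mw m n w
  rcases hk.lt_or_eq with hlt | heq
  · have : ¬ (∀ r < m, eastBefore w r ≤ n - (k + 1) + min r (k + 1)) :=
      fun h => by simpa using hmax ⟨hlt, h⟩
    push Not at this
    obtain ⟨r, hr, hgt⟩ := this
    have := hbelow r hr
    have := eastBefore_le_count_false w r
    exact ⟨r, by omega, by omega⟩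
  · rcases min_choice m n with h | h
    · exact ⟨m, by omega, by rw [eastBefore_of_count_true_le hm.le]; omega⟩
    · have := eastBefore_le_mw hm hn (Nat.zero_le m)
      exact ⟨0, by omega, by omega⟩

end MW

theorem eq_staircase_of_touch {P : ℕ → ℕ} {c k m : ℕ} (hkm : k ≤ m) (hP : Monotone P)
    (hbelow : ∀ r ≤ m, P r ≤ c + min r k) (htouch : ∃ r ≤ k, P r = c + r)
    (hleave : ∀ r < k, P r = c + r → P r < P (r + 1))
    (harrive : ∀ r < k, P (r + 1) = c + (r + 1) → P (r + 1) ≤ P r + 1) :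
    ∀ r ≤ m, P r = c + min r k := by
  have hstart : P 0 = c := by
    obtain ⟨r, hrk, hr⟩ := htouch
    induction r with
    | zero => simpa using hr
    | succ r ih =>
      have := hbelow r (by omega)
      have := harrive r (by omega) hr
      exact ih (by omega) (by omega)
  have hdiag : ∀ r ≤ k, P r = c + r := by
    intro r hrk
    induction r with
    | zero => simpa using hstart
    | succ r ih =>
      have := hleave r (by omega) (ih (by omega))
      have := hbelow (r + 1) (by omega)
      omega
  intro r hr
  rcases le_total r k with hrk | hkr
  · rw [hdiag r hrk, min_eq_left hrk]
  · have := hP hkr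
    have := hbelow r hr
    have := hdiag k le_rfl
    omega

section Critical

variable {m n : ℕ} {w : List Bool}

theorem hasCriticalFactor_of_eq_append_true_true {x z : List Bool}
    (hw : w = x ++ true :: true :: z) (hz : false ∈ z)
    (hs : StepShared w (deltaWord m n (mw m n w)) x.length) : HasCriticalFactor m n w := by
  obtain ⟨x₀, j, rfl, hx₀⟩ := exists_eq_append_replicate_getLast?_ne x true
  obtain ⟨l, z', rfl, hz'⟩ := exists_eq_replicate_append_head?_ne z true
  obtain ⟨y, rfl⟩ : ∃ y, z' = false :: y := by
    rcases z' with _ | ⟨_ | _, y⟩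
    · simp at hz
    · exact ⟨y, rfl⟩
    · simp at hz'
  refine ⟨x₀, y, j + 2 + l, by omega, Or.inl ⟨?_, hx₀, x₀.length + j, by omega, by omega, ?_⟩⟩
  · rw [hw, show j + 2 + l = j + (1 + (1 + l)) by omega, replicate_add, replicate_add,
      replicate_add]
    simp
  · simpa using hs

theorem hasCriticalFactor_of_eastBefore_succ_eq (hn : w.count false = n) {r : ℕ}
    (hr : r < mw m n w) (hrm : r < w.count true) (htouch : eastBefore w r = n - mw m n w + r)
    (hflat : eastBefore w (r + 1) = eastBefore w r) : HasCriticalFactor m n w := by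
  obtain ⟨⟨hk, -⟩, -⟩ := isGreatest_mw (m := m) hn
  obtain ⟨x, g, y, hw, hy, hxt, hxf, hg⟩ := exists_eq_append_true_replicate_false w hrm
  obtain rfl : g = 0 := by omega
  simp only [replicate_zero, nil_append] at hw
  have hyf : 0 < y.count false := by
    have := congrArg (count false) hw
    simp at this
    omega
  obtain ⟨z, rfl⟩ : ∃ z, y = true :: z := by
    rcases y with _ | ⟨_ | _, z⟩
    · simp at hyf
    · simp at hy
    · exact ⟨z, rfl⟩
  obtain ⟨X, Y, hδ, hXt, hXf⟩ := deltaWord_eq_append (m := m) (n := n) hr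
  refine hasCriticalFactor_of_eq_append_true_true hw (by simpa using hyf) ?_
  rw [hδ, hw]
  exact stepShared_append_cons (by omega) (by omega)

theorem hasCriticalFactor_of_eastBefore_succ_ge {r : ℕ}
    (hr : r < mw m n w) (hrm : r < w.count true)
    (htouch : eastBefore w (r + 1) = n - mw m n w + (r + 1))
    (hsteep : eastBefore w r + 1 < eastBefore w (r + 1)) : HasCriticalFactor m n w := by
  obtain ⟨x, g, y, hw, hy, hxt, hxf, hg⟩ := exists_eq_append_true_replicate_false w hrm
  obtain ⟨i, rfl⟩ : ∃ i, g = i + 1 := ⟨g - 1, by omega⟩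
  obtain ⟨X, Y, hδ, hXt, hXf⟩ := deltaWord_eq_append (m := m) (n := n) hr
  refine ⟨x, y, i + 1, by omega, Or.inr ⟨by simpa using hw, hy, x.length + (i + 1), by omega,
    by omega, ?_⟩⟩
  have hw' : w = (x ++ true :: replicate i false) ++ false :: y := by
    rw [hw]
    simp [replicate_succ']
  have := stepShared_append_cons (x := x ++ true :: replicate i false) (X := X ++ [true])
    (b := false) (y := y) (Y := Y) (by simp [hXt, hxt, count_replicate]) (by simp; omega)
  rw [hδ, hw']
  simpa [add_assoc] using this

theorem HasCriticalFactor.infix (h : HasCriticalFactor m n w) :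
    [true, true, false] <:+: w ∨ [true, false, false] <:+: w := by
  obtain ⟨x, y, i, hi, ⟨rfl, -⟩ | ⟨rfl, -⟩⟩ := h
  · obtain ⟨j, rfl⟩ : ∃ j, i = j + 2 := ⟨i - 2, by omega⟩
    exact Or.inl ⟨x ++ replicate j true, y, by simp [replicate_succ']⟩
  · obtain ⟨j, rfl⟩ : ∃ j, i = j + 2 := ⟨i - 2, by omega⟩
    exact Or.inr ⟨x, replicate j false ++ y, by simp [replicate_succ]⟩

end Critical

theorem not_infix_flatten_replicate_append_replicate (b c : ℕ) :
    ¬ [true, true, false] <:+: (replicate b [true, false]).flatten ++ replicate c true ∧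
      ¬ [true, false, false] <:+: (replicate b [true, false]).flatten ++ replicate c true ∧
      ((replicate b [true, false]).flatten ++ replicate c true).head? ≠ some false := by
  induction b with
  | zero =>
    refine ⟨fun h => ?_, fun h => ?_, ?_⟩
    · simpa using h.subset (by simp : false ∈ [true, true, false])
    · simpa using h.subset (by simp : false ∈ [true, false, false])
    · cases c <;> simp [replicate_succ]
  | succ b ih =>
    obtain ⟨h₁, h₂, h₃⟩ := ih
    refine ⟨?_, ?_, by simp [replicate_succ]⟩ <;> simp [replicate_succ, infix_cons_iff, h₁, h₂]
    rintro ⟨t, ht⟩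
    exact h₃ (by rw [← ht]; rfl)

theorem not_infix_staircase (a b c : ℕ) :
    ¬ [true, true, false] <:+:
        replicate a false ++ (replicate b [true, false]).flatten ++ replicate c true ∧
      ¬ [true, false, false] <:+:
        replicate a false ++ (replicate b [true, false]).flatten ++ replicate c true := by
  induction a with
  | zero =>
    obtain ⟨h₁, h₂, -⟩ := not_infix_flatten_replicate_append_replicate b c
    simpa using And.intro h₁ h₂
  | succ a ih => simpa [replicate_succ, infix_cons_iff] using ih

/-- Characterization of words without critical factors. -/
theorem stmt3 (m n : ℕ) (w : List Bool) (hn : w.count true = m) (he : w.count false = n) :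
    ¬ HasCriticalFactor m n w ↔
      ∃ a b c : ℕ, w = List.replicate a false ++
        (List.replicate b [true, false]).flatten ++ List.replicate c true := by
  constructor
  · intro hnc
    obtain ⟨⟨hk, -⟩, -⟩ := isGreatest_mw (m := m) he
    have hstair : ∀ r ≤ m, eastBefore w r = n - mw m n w + min r (mw m n w) :=
      eq_staircase_of_touch (by omega) (monotone_eastBefore w)
        (fun r hr => eastBefore_le_mw hn he hr) (exists_eastBefore_eq_mw hn he)
        (fun r hr htouch => (monotone_eastBefore w (Nat.le_succ r)).lt_of_ne fun hflat =>
          hnc (hasCriticalFactor_of_eastBefore_succ_eq he hr (by omega) htouch hflat.symm))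
        (fun r hr htouch => not_lt.mp fun hsteep =>
          hnc (hasCriticalFactor_of_eastBefore_succ_ge hr (by omega) htouch hsteep))
    suffices w = deltaWord m n (mw m n w) from ⟨_, _, _, this⟩
    refine eq_of_eastBefore_eq ?_ ?_ fun r hr => ?_
    · rw [hn, count_true_deltaWord n (by omega)]
    · rw [he, count_false_deltaWord m (by omega)]
    · rw [hstair r (by omega), eastBefore_deltaWord]
  · rintro ⟨a, b, c, rfl⟩ h
    obtain ⟨h₁, h₂⟩ := not_infix_staircase a b c
    exact h.infix.elim h₁ h₂
end

section
/- In the path algebra 𝒫, the elements s = 𝖾𝗇 and t = 𝗇𝖾 commute with each other, and they are algebraically independent over ℂ(q); consequently the subalgebra of 𝒫 generated by s and t is a commutative polynomial algebra ℂ(q)[s,t] in two variables. -/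
/-! Expanding `𝖾𝗇𝖾𝗇` once as `(𝖾𝗇𝖾)𝗇` and once as `𝖾(𝗇𝖾𝗇)` gives two expressions that differ
only in `𝗇𝖾𝖾𝗇` versus `𝖾𝗇𝗇𝖾`, so `s` and `t` commute.

For independence, let `𝒫` act on sequences `ℤ → R` over a commutative `F`-algebra `R`, with `𝗇`
shifting down and `𝖾` shifting up with a weight `c`; this respects the relations exactly when
`(1 + q) c_j = q c_{j+1} + c_{j-1}`. Then `s` and `t` act diagonally, by `c_{j+1}` and `c_j`.
The recurrence is solved by `x + q^{-j} y`, and as `q ≠ 1` we may take `c_1 = X₀`, `c_0 = X₁`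
in `R = F[X₀, X₁]`: then `P(s, t)` sends the constant sequence `1` to a sequence with
`P` at index `0`. -/

open MvPolynomial

lemma qq_ne_zero : qq ≠ 0 := RatFunc.X_ne_zero

lemma qq_ne_one : qq ≠ 1 := fun h => by
  have h_deg := RatFunc.intDegree_X (K := ℂ)
  rw [show RatFunc.X = 1 from h, RatFunc.intDegree_one] at h_deg
  exact zero_ne_one h_deg

lemma Pe_mul_Pn_mul_Pe : (1 + qq) • (Pe * Pn * Pe) = qq • (Pe * Pe * Pn) + Pn * Pe * Pe := by
  have h := RingQuot.mkAlgHom_rel F PathRel.mod1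
  simp only [map_smul, map_add, map_mul] at h
  exact h

lemma Pn_mul_Pe_mul_Pn : (1 + qq) • (Pn * Pe * Pn) = qq • (Pe * Pn * Pn) + Pn * Pn * Pe := by
  have h := RingQuot.mkAlgHom_rel F PathRel.mod2
  simp only [map_smul, map_add, map_mul] at h
  exact h

theorem commute_Pe_mul_Pn_Pn_mul_Pe : Commute (Pe * Pn) (Pn * Pe) := by
  have h₁ := congrArg (· * Pn) Pe_mul_Pn_mul_Pe
  have h₂ := congrArg (Pe * ·) Pn_mul_Pe_mul_Pn
  simp only [smul_mul_assoc, add_mul, mul_smul_comm, mul_add, ← mul_assoc] at h₁ h₂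
  simpa only [Commute, SemiconjBy, ← mul_assoc] using add_left_cancel (h₂.symm.trans h₁)

lemma one_add_mul_zpow_neg {K : Type*} [Field K] {q : K} (hq : q ≠ 0) (j : ℤ) :
    (1 + q) * q ^ (-j) = q * q ^ (-(j + 1)) + q ^ (-(j - 1)) := by
  rw [show -(j + 1) = -j - 1 by ring, show -(j - 1) = -j + 1 by ring,
    zpow_sub_one₀ hq, zpow_add_one₀ hq]
  field_simp

noncomputable section Representation

variable {R : Type*} [CommRing R] [Algebra F R]

def weightedShiftUp (c : ℤ → R) : Module.End F (ℤ → R) where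
  toFun f j := c (j + 1) * f (j + 1)
  map_add' f g := by funext j; simp [mul_add]
  map_smul' a f := by funext j; simp

@[simp] lemma weightedShiftUp_apply (c : ℤ → R) (f : ℤ → R) (j : ℤ) :
    weightedShiftUp c f j = c (j + 1) * f (j + 1) := rfl

def shiftDown : Module.End F (ℤ → R) := LinearMap.funLeft F R (· - 1)

@[simp] lemma shiftDown_apply (f : ℤ → R) (j : ℤ) : (shiftDown f) j = f (j - 1) := rfl

def IsPathWeight (c : ℤ → R) : Prop := ∀ j, (1 + qq) • c j = qq • c (j + 1) + c (j - 1)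

lemma isPathWeight_add_zpow_smul (x y : R) :
    IsPathWeight fun j => x + qq ^ (-j) • y := by
  intro j
  simp only [smul_add, smul_smul, one_add_mul_zpow_neg qq_ne_zero j, add_smul, one_smul]
  abel

variable {c : ℤ → R}

def pathRep (hc : IsPathWeight c) : PathAlg →ₐ[F] Module.End F (ℤ → R) :=
  RingQuot.liftAlgHom F ⟨FreeAlgebra.lift F fun b => cond b shiftDown (weightedShiftUp c), by
    rintro _ _ (_ | _) <;> ext f j <;>
      simp only [map_smul, map_add, map_mul, FreeAlgebra.lift_ι_apply, cond_true, cond_false,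
        LinearMap.smul_apply, LinearMap.add_apply, Module.End.mul_apply, Pi.smul_apply,
        Pi.add_apply, weightedShiftUp_apply, shiftDown_apply, sub_add_cancel, add_sub_cancel_right]
    · have h := hc (j + 1)
      rw [add_sub_cancel_right] at h
      simp only [Algebra.smul_def] at h ⊢
      linear_combination c (j + 1) * f (j + 1) * h
    · have h := hc j
      simp only [Algebra.smul_def] at h ⊢
      linear_combination f (j - 1) * h⟩

lemma pathRep_Pe (hc : IsPathWeight c) : pathRep hc Pe = weightedShiftUp c := by
  simp [pathRep, Pe]

lemma pathRep_Pn (hc : IsPathWeight c) : pathRep hc Pn = shiftDown := by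
  simp [pathRep, Pn]

lemma pathRep_Pe_mul_Pn_pow_apply (hc : IsPathWeight c) (a : ℕ) (f : ℤ → R) (j : ℤ) :
    (pathRep hc (Pe * Pn) ^ a) f j = c (j + 1) ^ a * f j := by
  induction a generalizing f with
  | zero => simp
  | succ a ih =>
    rw [pow_succ, Module.End.mul_apply, ih, map_mul, pathRep_Pe, pathRep_Pn]
    simp only [Module.End.mul_apply, weightedShiftUp_apply, shiftDown_apply, add_sub_cancel_right]
    ring

lemma pathRep_Pn_mul_Pe_pow_apply (hc : IsPathWeight c) (b : ℕ) (f : ℤ → R) (j : ℤ) :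
    (pathRep hc (Pn * Pe) ^ b) f j = c j ^ b * f j := by
  induction b generalizing f with
  | zero => simp
  | succ b ih =>
    rw [pow_succ, Module.End.mul_apply, ih, map_mul, pathRep_Pe, pathRep_Pn]
    simp only [Module.End.mul_apply, weightedShiftUp_apply, shiftDown_apply, sub_add_cancel]
    ring

lemma pathRep_evalST_apply_one (hc : IsPathWeight c) (P : MvPolynomial (Fin 2) F) :
    pathRep hc (evalST (Pe * Pn) (Pn * Pe) P) 1 0 = aeval ![c 1, c 0] P := by
  rw [aeval_def, eval₂_eq', evalST, map_sum, LinearMap.sum_apply, Finset.sum_apply]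
  refine Finset.sum_congr rfl fun d _ => ?_
  rw [map_smul, LinearMap.smul_apply, Pi.smul_apply, map_mul, Module.End.mul_apply, map_pow,
    map_pow, pathRep_Pe_mul_Pn_pow_apply, pathRep_Pn_mul_Pe_pow_apply, Fin.prod_univ_two]
  simp [Algebra.smul_def]

end Representation

lemma exists_isPathWeight_eq_X :
    ∃ c : ℤ → MvPolynomial (Fin 2) F, IsPathWeight c ∧ c 1 = X 0 ∧ c 0 = X 1 := by
  have hq : 1 - qq⁻¹ ≠ 0 := sub_ne_zero.2 fun h => qq_ne_one (inv_eq_one.1 h.symm)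
  set y : MvPolynomial (Fin 2) F := (1 - qq⁻¹)⁻¹ • (X 1 - X 0)
  refine ⟨_, isPathWeight_add_zpow_smul (X 1 - y) y, ?_, by simp⟩
  have hy : (1 - qq⁻¹) • y = X 1 - X 0 := by rw [smul_smul, mul_inv_cancel₀ hq, one_smul]
  rw [sub_smul, one_smul] at hy
  simp only [zpow_neg, zpow_one]
  linear_combination -hy

/-- `s = 𝖾𝗇` and `t = 𝗇𝖾` commute and are algebraically independent,
so they generate a commutative polynomial algebra `ℂ(q)[s,t]`. -/
theorem stmt5 :
    (Pe * Pn) * (Pn * Pe) = (Pn * Pe) * (Pe * Pn) ∧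
    ∀ P : MvPolynomial (Fin 2) F, evalST (Pe * Pn) (Pn * Pe) P = 0 → P = 0 := by
  refine ⟨commute_Pe_mul_Pn_Pn_mul_Pe, fun P hP => ?_⟩
  obtain ⟨c, hc, hc₁, hc₀⟩ := exists_isPathWeight_eq_X
  have h := pathRep_evalST_apply_one hc P
  have hX : ![c 1, c 0] = X := by ext1 i; fin_cases i <;> simp [hc₁, hc₀]
  rwa [hP, map_zero, LinearMap.zero_apply, Pi.zero_apply, hX, aeval_X_left_apply, eq_comm] at h
end

section
/- Let ℓ ≥ 0 and N ≥ ℓ+1 be integers, and let λ be a partition with exactly ℓ nonzero parts satisfying λ_1 ≤ N−1. Then H_ℓ^N(λ) = q^ℓ · [N−ℓ]_q · H_ℓ^{N−1}(λ). -/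
/-!
Split a maximal rook placement on the `(M+1) × (M+1)` board according to its rook in the last
column: it sits in some row `r`, and deleting that row and column leaves a placement `ρ` on the
`M × M` board. The last column lies outside `λ` since `λ₁ ≤ M`. If `r < ℓ`, a nonzero row of `λ`
is occupied by a rook outside `λ`, so fewer than `ℓ` rooks lie inside `λ`. If `r ≥ ℓ`, row `r`
of `λ` is empty, the rooks inside `λ` are those of `ρ`, and when there are `ℓ` of them every
rook in the first `ℓ` rows lies inside `λ`. The unattacked cells are then those of `ρ`, the top
`ℓ` cells of the last column, and the `M - r` cells of row `r` whose column rook lies lower.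
So the weight picks up `q ^ (ℓ + M - r)`, and summing over `ℓ ≤ r ≤ M` gives `q^ℓ [M+1-ℓ]_q`.
-/

open Finset

lemma Set.ncard_setOf_eq_sum {α : Type*} [Fintype α] (p : α → Prop) [DecidablePred p] :
    {a | p a}.ncard = ∑ a, if p a then 1 else 0 := by
  rw [Set.ncard_eq_toFinset_card', Set.toFinset_ofPred, Finset.card_filter]

lemma Fin.sum_ite_val_lt {K l : ℕ} (hl : l ≤ K) :
    ∑ i : Fin K, (if (i : ℕ) < l then 1 else 0) = l := by
  rw [← Finset.card_filter, Fin.card_filter_val_lt, min_eq_right hl]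

lemma Fin.sum_ite_le_val (K r : ℕ) :
    ∑ i : Fin K, (if r ≤ (i : ℕ) then 1 else 0) = K - r := by
  have h := Finset.card_filter_add_card_filter_not (s := univ) (fun i : Fin K => (i : ℕ) < r)
  simp only [Fin.card_filter_val_lt, not_lt, Finset.card_univ, Fintype.card_fin] at h
  rw [← Finset.card_filter]
  omega

lemma Fin.sum_ite_le_pow {R : Type*} [CommSemiring R] (x : R) (l M : ℕ) :
    ∑ r : Fin (M + 1), (if l ≤ (r : ℕ) then x ^ (M - r) else 0) =
      ∑ i ∈ range (M + 1 - l), x ^ i := by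
  rw [Fin.sum_univ_eq_sum_range (fun k => if l ≤ k then x ^ (M - k) else 0), ← sum_filter,
    show (range (M + 1)).filter (l ≤ ·) = Ico l (M + 1) by ext; simp only [mem_filter, mem_range, mem_Ico]; omega,
    sum_Ico_reflect _ _ le_rfl, Nat.sub_self, range_eq_Ico]

lemma Function.Embedding.ncard_preimage {α : Type*} [Finite α] (ρ : α ↪ α) (s : Set α) :
    (ρ ⁻¹' s).ncard = s.ncard :=
  Set.ncard_preimage_of_injective_subset_range ρ.injective
    (by simp [(Finite.surjective_of_injective ρ.injective).range_eq])

lemma Fin.ncard_setOf_val_lt {K l : ℕ} (hl : l ≤ K) : {i : Fin K | (i : ℕ) < l}.ncard = l := by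
  classical
  rw [Set.ncard_setOf_eq_sum, Fin.sum_ite_val_lt hl]

section RookPlacement

variable {M : ℕ}

def extendByRook (r : Fin (M + 1)) (ρ : Fin M ↪ Fin M) : Fin (M + 1) ↪ Fin (M + 1) where
  toFun := Fin.lastCases r fun j => r.succAbove (ρ j)
  inj' := by
    intro a b
    cases a using Fin.lastCases <;> cases b using Fin.lastCases <;>
      simp [Fin.succAbove_ne, (Fin.succAbove_ne _ _).symm]

@[simp]
lemma extendByRook_last (r : Fin (M + 1)) (ρ : Fin M ↪ Fin M) :
    extendByRook r ρ (Fin.last M) = r :=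
  Fin.lastCases_last (motive := fun _ => Fin (M + 1))

@[simp]
lemma extendByRook_castSucc (r : Fin (M + 1)) (ρ : Fin M ↪ Fin M) (j : Fin M) :
    extendByRook r ρ j.castSucc = r.succAbove (ρ j) :=
  Fin.lastCases_castSucc (motive := fun _ => Fin (M + 1)) j

lemma extendByRook_bijective :
    Function.Bijective fun p : Fin (M + 1) × (Fin M ↪ Fin M) => extendByRook p.1 p.2 := by
  refine (Fintype.bijective_iff_injective_and_card _).mpr ⟨?_, ?_⟩
  · rintro ⟨r, ρ⟩ ⟨s, σ⟩ h
    have hrs : r = s := by simpa using DFunLike.congr_fun h (Fin.last M)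
    subst hrs
    congr
    ext j
    have hj := DFunLike.congr_fun h j.castSucc
    simp only [extendByRook_castSucc] at hj
    exact congrArg Fin.val (Fin.succAbove_right_injective hj)
  · simp only [Fintype.card_prod, Fintype.card_embedding_eq, Fintype.card_fin,
      Nat.descFactorial_self, Nat.factorial_succ]

lemma lam_succAbove {lam : ℕ → ℕ} {r : Fin (M + 1)} (hrow : ∀ i, (r : ℕ) ≤ i → lam i = 0)
    (x : Fin M) : lam (r.succAbove x) = lam x := by
  rcases lt_or_ge x.castSucc r with h | h
  · rw [Fin.succAbove_of_castSucc_lt _ _ h, Fin.val_castSucc]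
  · have hrx : (r : ℕ) ≤ x := by simpa [Fin.le_iff_val_le_val] using h
    rw [Fin.succAbove_of_le_castSucc _ _ h, Fin.val_succ, hrow _ (by omega), hrow _ hrx]

section RookCount

variable {lam : ℕ → ℕ} {l : ℕ}

lemma lt_of_rookInside {m n : ℕ} (hrow : ∀ i, l ≤ i → lam i = 0) {ρ : Fin n ↪ Fin m}
    {j : Fin n} (h : rookInside m n lam ρ j) : (ρ j : ℕ) < l := by
  by_contra hl
  rw [rookInside, hrow _ (not_lt.mp hl)] at h
  omega

lemma rookInside_of_ncard_eq (hrow : ∀ i, l ≤ i → lam i = 0) (hl : l ≤ M) {ρ : Fin M ↪ Fin M}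
    (h : {j | rookInside M M lam ρ j}.ncard = l) {j : Fin M} (hj : (ρ j : ℕ) < l) :
    rookInside M M lam ρ j := by
  have hsub : {j | rookInside M M lam ρ j} ⊆ ρ ⁻¹' {i | (i : ℕ) < l} :=
    fun _ => lt_of_rookInside hrow
  have heq := Set.eq_of_subset_of_ncard_le hsub
    (by rw [ρ.ncard_preimage, Fin.ncard_setOf_val_lt hl, h])
  exact heq.symm.subset hj

variable (r : Fin (M + 1)) (ρ : Fin M ↪ Fin M)

lemma not_rookInside_extendByRook_last (hcol : ∀ i, lam i ≤ M) :
    ¬ rookInside (M + 1) (M + 1) lam (extendByRook r ρ) (Fin.last M) := by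
  simpa [rookInside] using hcol r

lemma ncard_rookInside_extendByRook (hcol : ∀ i, lam i ≤ M)
    (hrow : ∀ i, (r : ℕ) ≤ i → lam i = 0) :
    {j | rookInside (M + 1) (M + 1) lam (extendByRook r ρ) j}.ncard =
      {j | rookInside M M lam ρ j}.ncard := by
  have hlast := not_rookInside_extendByRook_last r ρ hcol
  unfold rookInside at hlast ⊢
  rw [Set.ncard_setOf_eq_sum, Set.ncard_setOf_eq_sum, Fin.sum_univ_castSucc, if_neg hlast]
  simp only [extendByRook_castSucc, Fin.val_castSucc, lam_succAbove hrow, add_zero]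

lemma ncard_rookInside_extendByRook_lt (hcol : ∀ i, lam i ≤ M)
    (hrow : ∀ i, l ≤ i → lam i = 0) (hr : (r : ℕ) < l) (hl : l ≤ M + 1) :
    {j | rookInside (M + 1) (M + 1) lam (extendByRook r ρ) j}.ncard < l := by
  have hsub : {j | rookInside (M + 1) (M + 1) lam (extendByRook r ρ) j} ⊆
      extendByRook r ρ ⁻¹' ({i | (i : ℕ) < l} \ {r}) := by
    intro j hj
    refine ⟨lt_of_rookInside hrow hj, fun hjr => ?_⟩
    have hjlast : j = Fin.last M :=
      (extendByRook r ρ).injective (by rw [extendByRook_last]; exact hjr)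
    exact not_rookInside_extendByRook_last r ρ hcol (hjlast ▸ hj)
  have hcard := Set.ncard_le_ncard hsub
  rw [Function.Embedding.ncard_preimage,
    Set.ncard_sdiff_singleton_of_mem (show r ∈ {i : Fin (M + 1) | (i : ℕ) < l} from hr),
    Fin.ncard_setOf_val_lt hl] at hcard
  omega

end RookCount

section Unattacked

variable {lam : ℕ → ℕ} {r : Fin (M + 1)} {ρ : Fin M ↪ Fin M}

lemma unattacked_extendByRook_succAbove_castSucc (hrow : ∀ i, (r : ℕ) ≤ i → lam i = 0)
    (i j : Fin M) :
    Unattacked (M + 1) (M + 1) lam (extendByRook r ρ) (r.succAbove i) j.castSucc ↔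
      Unattacked M M lam ρ i j := by
  simp [Unattacked, Fin.forall_fin_succ', lam_succAbove hrow, (Fin.succAbove_ne _ _).symm,
    Fin.succAbove_lt_succAbove_iff]

lemma unattacked_extendByRook_row (hr : lam r = 0) (j : Fin M) :
    Unattacked (M + 1) (M + 1) lam (extendByRook r ρ) r j.castSucc ↔ (r : ℕ) ≤ ρ j := by
  simpa [Unattacked, Fin.forall_fin_succ', hr, Fin.succAbove_ne, Fin.succAbove_lt_iff_castSucc_lt,
    Fin.le_last] using Fin.le_iff_val_le_val (a := r) (b := (ρ j).castSucc)

lemma unattacked_extendByRook_last {l : ℕ} (hcol : ∀ i, lam i ≤ M)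
    (hrow : ∀ i, l ≤ i → lam i = 0) (hl : l ≤ (r : ℕ))
    (hfull : ∀ j, (ρ j : ℕ) < l → rookInside M M lam ρ j) (i : Fin (M + 1)) :
    Unattacked (M + 1) (M + 1) lam (extendByRook r ρ) i (Fin.last M) ↔ (i : ℕ) < l := by
  have hlast : ¬ (Fin.last M : ℕ) < lam i := by simpa using hcol i
  obtain rfl | ⟨x, rfl⟩ := Fin.eq_self_or_eq_succAbove r i
  · simp [Unattacked, hl]
  simp only [Unattacked, hlast, if_false, Fin.forall_fin_succ', extendByRook_castSucc,
    extendByRook_last, Fin.succAbove_right_inj]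
  rcases lt_or_ge x.castSucc r with hx | hx
  · rw [Fin.succAbove_of_castSucc_lt _ _ hx, Fin.val_castSucc]
    refine ⟨fun ⟨_, _, hin, _⟩ => ?_, fun hxl => ⟨?_, ?_, fun j hj _ => ?_, by simp⟩⟩
    · obtain ⟨j, rfl⟩ := Finite.surjective_of_injective ρ.injective x
      by_contra hxl
      simpa [hrow _ (not_lt.mp hxl)] using hin j rfl (Fin.castSucc_lt_last j)
    · exact hx.ne'
    · exact not_lt.mpr hx.le
    · simpa [rookInside, hj] using hfull j (hj ▸ hxl)
  · have hrx : r < r.succAbove x := (Fin.lt_succAbove_iff_le_castSucc r x).mpr hx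
    have hxl : ¬ (r.succAbove x : ℕ) < l := by simp only [Fin.lt_def] at hrx; omega
    simp [hrx, hxl]

end Unattacked

section Stat

variable {lam : ℕ → ℕ} {l : ℕ} {r : Fin (M + 1)} {ρ : Fin M ↪ Fin M}

lemma statRook_extendByRook (hcol : ∀ i, lam i ≤ M) (hrow : ∀ i, l ≤ i → lam i = 0)
    (hl : l ≤ (r : ℕ)) (hfull : ∀ j, (ρ j : ℕ) < l → rookInside M M lam ρ j) :
    statRook (M + 1) (M + 1) lam (extendByRook r ρ) = l + (M - r) + statRook M M lam ρ := by
  classical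
  have hrow_r : ∀ i, (r : ℕ) ≤ i → lam i = 0 := fun i hi => hrow i (hl.trans hi)
  have hlast : ∑ i, (if Unattacked (M + 1) (M + 1) lam (extendByRook r ρ) i (Fin.last M)
      then 1 else 0) = l := by
    simp_rw [unattacked_extendByRook_last hcol hrow hl hfull]
    exact Fin.sum_ite_val_lt (by omega)
  have hcolumn : ∀ j : Fin M,
      ∑ i, (if Unattacked (M + 1) (M + 1) lam (extendByRook r ρ) i j.castSucc then 1 else 0) =
        (if (r : ℕ) ≤ ρ j then 1 else 0) + ∑ i, if Unattacked M M lam ρ i j then 1 else 0 := by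
    intro j
    rw [Fin.sum_univ_succAbove _ r]
    simp_rw [unattacked_extendByRook_row (hrow_r r le_rfl),
      unattacked_extendByRook_succAbove_castSucc hrow_r]
  have hrowsum : ∑ j : Fin M, (if (r : ℕ) ≤ ρ j then 1 else 0) = M - r :=
    ((Finite.injective_iff_bijective.mp ρ.injective).sum_comp
      fun i : Fin M => if (r : ℕ) ≤ i then 1 else 0).trans (Fin.sum_ite_le_val M r)
  rw [statRook, statRook, Set.ncard_setOf_eq_sum, Set.ncard_setOf_eq_sum,
    Fintype.sum_prod_type_right, Fintype.sum_prod_type_right, Fin.sum_univ_castSucc, hlast,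
    Finset.sum_congr rfl fun j _ => hcolumn j, Finset.sum_add_distrib, hrowsum]
  ring

end Stat

noncomputable def qHitWeight (m n : ℕ) (lam : ℕ → ℕ) (k : ℕ) (ρ : Fin n ↪ Fin m) : F :=
  if Set.ncard {j : Fin n | rookInside m n lam ρ j} = k then qq ^ statRook m n lam ρ else 0

lemma qHit_eq_sum_qHitWeight (m n : ℕ) (lam : ℕ → ℕ) (k : ℕ) :
    qHit m n lam k = ∑ ρ, qHitWeight m n lam k ρ :=
  rfl

section Recursion

variable {lam : ℕ → ℕ} {l : ℕ}

lemma qHitWeight_extendByRook (hcol : ∀ i, lam i ≤ M) (hrow : ∀ i, l ≤ i → lam i = 0)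
    (hlM : l ≤ M) (r : Fin (M + 1)) (ρ : Fin M ↪ Fin M) :
    qHitWeight (M + 1) (M + 1) lam l (extendByRook r ρ) =
      if l ≤ (r : ℕ) then qq ^ (l + (M - r)) * qHitWeight M M lam l ρ else 0 := by
  unfold qHitWeight
  by_cases hr : l ≤ (r : ℕ)
  · rw [if_pos hr, ncard_rookInside_extendByRook r ρ hcol fun i hi => hrow i (hr.trans hi)]
    split_ifs with hcount
    · rw [statRook_extendByRook hcol hrow hr
        fun _ => rookInside_of_ncard_eq hrow hlM hcount, pow_add]
    · rw [mul_zero]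
  · rw [if_neg hr, if_neg (ncard_rookInside_extendByRook_lt r ρ hcol hrow (not_le.mp hr)
      (by omega)).ne]

lemma qHit_succ (hcol : ∀ i, lam i ≤ M) (hrow : ∀ i, l ≤ i → lam i = 0) (hlM : l ≤ M) :
    qHit (M + 1) (M + 1) lam l = qq ^ l * qint (M + 1 - l) * qHit M M lam l := by
  rw [qHit_eq_sum_qHitWeight, ← extendByRook_bijective.sum_comp, Fintype.sum_prod_type]
  simp_rw [qHitWeight_extendByRook hcol hrow hlM, ← ite_zero_mul, ← Finset.mul_sum,
    ← Finset.sum_mul, ← qHit_eq_sum_qHitWeight]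
  rw [qint, ← Fin.sum_ite_le_pow, Finset.mul_sum]
  congr 1
  refine Finset.sum_congr rfl fun r _ => ?_
  split_ifs <;> simp [pow_add]

end Recursion

end RookPlacement

/-- `H_ℓ^N(λ) = q^ℓ · [N-ℓ]_q · H_ℓ^{N-1}(λ)` for `λ` with exactly `ℓ`
nonzero parts and `λ_1 ≤ N-1`. -/
theorem stmt10 (l N : ℕ) (hN : l + 1 ≤ N) (lam : ℕ → ℕ)
    (hanti : ∀ i j, i ≤ j → lam j ≤ lam i)
    (hsupp : ∀ i, lam i ≠ 0 ↔ i < l)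
    (h1 : lam 0 ≤ N - 1) :
    qHit N N lam l = qq ^ l * qint (N - l) * qHit (N - 1) (N - 1) lam l := by
  obtain ⟨M, rfl⟩ : ∃ M, N = M + 1 := ⟨N - 1, by omega⟩
  simp only [Nat.add_sub_cancel] at h1 ⊢
  exact qHit_succ (fun i => (hanti 0 i i.zero_le).trans h1)
    (fun i hi => not_not.mp fun h => absurd ((hsupp i).mp h) (not_lt.mpr hi)) (by omega)
end
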